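/- Consider the 2-state HMM with operators τ₁ = [[0.25, 0.5],[0.75, 0]], τ₂ = [[0,0],[0,0.5]] and initial state x₀ = (1,0)ᵀ. With the normalized update x_{t} = τ_{y_t} x_{t−1} / (1ᵀ τ_{y_t} x_{t−1}), after observing the sequence (1,1) the states satisfy x₁ = (0.25, 0.75)ᵀ, x₂ = (0.7, 0.3)ᵀ, and x₂ = 0.6 x₀ + 0.4 x₁, with x₀ and x₁ linearly independent. -/

import Mathlib

open Matrix

noncomputable section

def τ1 : Matrix (Fin 2) (Fin 2) ℝ := !![0.25, 0.5; 0.75, 0]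
def τ2 : Matrix (Fin 2) (Fin 2) ℝ := !![0, 0; 0, 0.5]
def x0 : Fin 2 → ℝ := ![1, 0]
def x1 : Fin 2 → ℝ := ((1 : Fin 2 → ℝ) ⬝ᵥ (τ1 *ᵥ x0))⁻¹ • (τ1 *ᵥ x0)
def x2 : Fin 2 → ℝ := ((1 : Fin 2 → ℝ) ⬝ᵥ (τ1 *ᵥ x1))⁻¹ • (τ1 *ᵥ x1)

theorem linearIndependent_pair_of_det_ne_zero {K : Type*} [Field K] {u v : Fin 2 → K}
    (h : u 0 * v 1 - u 1 * v 0 ≠ 0) :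
    LinearIndependent K ![u, v] :=
  linearIndependent_rows_of_det_ne_zero (A := Matrix.of ![u, v]) (by simpa [det_fin_two] using h)

theorem τ1_mulVec_x0 : τ1 *ᵥ x0 = ![0.25, 0.75] := by
  ext i; fin_cases i <;> norm_num [τ1, x0]

theorem x1_eq : x1 = ![0.25, 0.75] := by
  rw [x1, τ1_mulVec_x0]
  ext i; fin_cases i <;> norm_num [dotProduct, Fin.sum_univ_two]

theorem τ1_mulVec_x1 : τ1 *ᵥ x1 = ![0.4375, 0.1875] := by
  ext i; fin_cases i <;> norm_num [τ1, x1_eq]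

theorem x2_eq : x2 = ![0.7, 0.3] := by
  rw [x2, τ1_mulVec_x1]
  ext i; fin_cases i <;> norm_num [dotProduct, Fin.sum_univ_two]

/-- The concrete HMM reaches, after observing the sequence (1,1), a state lying strictly
inside the convex hull of two linearly independent previously reached states. -/
theorem hmm_convex_combination_example :
    x1 = ![0.25, 0.75] ∧ x2 = ![0.7, 0.3] ∧
      x2 = (0.6 : ℝ) • x0 + (0.4 : ℝ) • x1 ∧ LinearIndependent ℝ ![x0, x1] := by
  refine ⟨x1_eq, x2_eq, ?_, ?_⟩
  · ext i; fin_cases i <;> norm_num [x2_eq, x1_eq, x0]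
  · exact linearIndependent_pair_of_det_ne_zero (by norm_num [x0, x1_eq])

end
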